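/- arXiv:2511.15297 — 3 statements merged into one kernel-verified Lean document; each statement's English description precedes it below -/
import Mathlib

section
/- Let (λ_j)_{j≥1} be a sequence of real numbers and suppose there are constants C₁ > 0 and m ≥ 1 such that for every N > 1 the number of indices j with λ_j ≤ N is at most C₁·N^m. Let c₀ > 0. Then there exists a constant c > 0, depending only on C₁, m and c₀, such that for every L₀ ∈ (0, 1/2) there is an L ∈ [L₀/2, L₀] with |λ_j − c₀/L| ≥ c·L^{m−1} for every index j. -/
/-- Pigeonhole choice of scale: a Weyl-type counting bound on a sequence of
eigenvalues forces the existence, in any dyadic interval `[L₀/2, L₀]` with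
`L₀ ∈ (0, 1/2)`, of a scale `L` for which `c₀/L` is quantitatively separated
from all eigenvalues: `|λ_j − c₀/L| ≥ c·L^{m−1}` for all `j`. -/
theorem stmt_1
    (lam : ℕ → ℝ) (C₁ m : ℝ) (hC₁ : 0 < C₁) (hm : 1 ≤ m)
    (hweyl : ∀ N : ℝ, 1 < N →
      {j : ℕ | lam j ≤ N}.Finite ∧
        ((Set.ncard {j : ℕ | lam j ≤ N}) : ℝ) ≤ C₁ * N ^ m)
    (c₀ : ℝ) (hc₀ : 0 < c₀) :
    ∃ c > (0 : ℝ), ∀ L₀ ∈ Set.Ioo (0 : ℝ) (1 / 2),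
      ∃ L ∈ Set.Icc (L₀ / 2) L₀,
        ∀ j : ℕ, c * L ^ (m - 1) ≤ |lam j - c₀ / L| := by
  set A : ℝ := (2 * c₀ + 1) ^ m with hA
  have hApos : 0 < A := Real.rpow_pos_of_pos (by linarith) m
  have hcpos : 0 < min 1 (c₀ / (4 * C₁ * A)) := lt_min one_pos (by positivity)
  refine ⟨min 1 (c₀ / (4 * C₁ * A)), hcpos, ?_⟩
  intro L₀ hL₀
  obtain ⟨hL₀0, hL₀half⟩ := hL₀
  set c := min 1 (c₀ / (4 * C₁ * A)) with hcdef
  have hL₀1 : L₀ < 1 := by linarith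
  set δ := c * L₀ ^ (m - 1) with hδ
  have hpow1 : L₀ ^ (m - 1) ≤ 1 := Real.rpow_le_one hL₀0.le hL₀1.le (by linarith)
  have hpowpos : 0 < L₀ ^ (m - 1) := Real.rpow_pos_of_pos hL₀0 _
  have hδpos : 0 < δ := mul_pos hcpos hpowpos
  have hδ1 : δ ≤ 1 := by
    calc δ ≤ 1 * L₀ ^ (m - 1) := by
            apply mul_le_mul_of_nonneg_right (min_le_left _ _) hpowpos.le
      _ ≤ 1 := by simpa using hpow1
  set N := 2 * c₀ / L₀ + 1 with hNdef
  have hq : 0 < 2 * c₀ / L₀ := by positivity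
  have hN1 : 1 < N := by rw [hNdef]; linarith
  obtain ⟨hfin, hcard⟩ := hweyl N hN1
  -- bound on N ^ m
  have hinv : 1 ≤ 1 / L₀ := by
    rw [le_div_iff₀ hL₀0]; linarith
  have hNle : N ≤ (2 * c₀ + 1) / L₀ := by
    have h1 : (2 * c₀ + 1) / L₀ = 2 * c₀ / L₀ + 1 / L₀ := by ring
    rw [hNdef, h1]
    linarith
  have hNm : N ^ m ≤ A / L₀ ^ m := by
    rw [hA]
    calc N ^ m ≤ ((2 * c₀ + 1) / L₀) ^ m :=
          Real.rpow_le_rpow (by linarith) hNle (by linarith)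
      _ = (2 * c₀ + 1) ^ m / L₀ ^ m := Real.div_rpow (by linarith) hL₀0.le m
  have hLpowm : 0 < L₀ ^ m := Real.rpow_pos_of_pos hL₀0 _
  have hpowrel : L₀ ^ (m - 1) = L₀ ^ m / L₀ := by
    rw [Real.rpow_sub hL₀0, Real.rpow_one]
  -- the key smallness bound
  have hkey : C₁ * N ^ m * (2 * δ) < c₀ / L₀ := by
    have hcle : c ≤ c₀ / (4 * C₁ * A) := min_le_right _ _
    have h1 : C₁ * N ^ m * (2 * δ) ≤ C₁ * (A / L₀ ^ m) * (2 * δ) := by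
      apply mul_le_mul_of_nonneg_right _ (by positivity)
      exact mul_le_mul_of_nonneg_left hNm hC₁.le
    have h2 : C₁ * (A / L₀ ^ m) * (2 * δ) = 2 * c * C₁ * A / L₀ := by
      rw [hδ, hpowrel]; field_simp
    have h3 : 2 * c * C₁ * A / L₀ ≤ c₀ / (2 * L₀) := by
      rw [div_le_div_iff₀ hL₀0 (by positivity)]
      have h : c * (4 * C₁ * A) ≤ c₀ := by
        rw [← le_div_iff₀ (by positivity)]; exact hcle
      nlinarith [mul_le_mul_of_nonneg_right h hL₀0.le]
    have h4 : c₀ / (2 * L₀) < c₀ / L₀ := by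
      rw [div_lt_div_iff₀ (by positivity) hL₀0]
      nlinarith
    linarith
  -- pigeonhole via measure
  set F := hfin.toFinset with hF
  have hcardF : (F.card : ℝ) ≤ C₁ * N ^ m := by
    rwa [hF, ← Set.ncard_eq_toFinset_card _ hfin]
  have hex : ∃ μ ∈ Set.Icc (c₀ / L₀) (2 * c₀ / L₀),
      μ ∉ ⋃ j ∈ F, Set.Icc (lam j - δ) (lam j + δ) := by
    by_contra h
    push_neg at h
    have hsub : Set.Icc (c₀ / L₀) (2 * c₀ / L₀) ⊆
        ⋃ j ∈ F, Set.Icc (lam j - δ) (lam j + δ) := h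
    have h1 := MeasureTheory.measure_mono (μ := MeasureTheory.volume) hsub
    have h2 := MeasureTheory.measure_biUnion_finset_le
      (μ := MeasureTheory.volume) F (fun j => Set.Icc (lam j - δ) (lam j + δ))
    have h3 : MeasureTheory.volume (Set.Icc (c₀ / L₀) (2 * c₀ / L₀)) ≤
        ∑ j ∈ F, MeasureTheory.volume (Set.Icc (lam j - δ) (lam j + δ)) := h1.trans h2
    rw [Real.volume_Icc] at h3
    have h4 : ∀ j ∈ F, MeasureTheory.volume (Set.Icc (lam j - δ) (lam j + δ))
        = ENNReal.ofReal (2 * δ) := by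
      intro j _
      rw [Real.volume_Icc]
      congr 1
      ring
    rw [Finset.sum_congr rfl h4, Finset.sum_const, nsmul_eq_mul] at h3
    have h5 : ENNReal.ofReal ((F.card : ℝ) * (2 * δ))
        = (F.card : ENNReal) * ENNReal.ofReal (2 * δ) := by
      rw [ENNReal.ofReal_mul (by positivity), ENNReal.ofReal_natCast]
    rw [← h5] at h3
    have h6 : 2 * c₀ / L₀ - c₀ / L₀ ≤ (F.card : ℝ) * (2 * δ) :=
      (ENNReal.ofReal_le_ofReal_iff (by positivity)).mp h3
    have h7 : 2 * c₀ / L₀ - c₀ / L₀ = c₀ / L₀ := by ring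
    have h8 : (F.card : ℝ) * (2 * δ) ≤ C₁ * N ^ m * (2 * δ) :=
      mul_le_mul_of_nonneg_right hcardF (by positivity)
    linarith
  obtain ⟨μ, hμmem, hμnot⟩ := hex
  clear_value A c δ N F
  obtain ⟨hμ1, hμ2⟩ := hμmem
  have hμpos : 0 < μ := lt_of_lt_of_le (by positivity) hμ1
  refine ⟨c₀ / μ, ⟨?_, ?_⟩, ?_⟩
  · -- L₀ / 2 ≤ c₀ / μ
    rw [div_le_div_iff₀ two_pos hμpos]
    have : μ * L₀ ≤ 2 * c₀ := (le_div_iff₀ hL₀0).mp hμ2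
    linarith [this, mul_comm L₀ μ]
  · -- c₀ / μ ≤ L₀
    rw [div_le_iff₀ hμpos]
    have : c₀ ≤ μ * L₀ := (div_le_iff₀ hL₀0).mp hμ1
    linarith [this, mul_comm L₀ μ]
  · intro j
    set L := c₀ / μ with hLdef
    have hLpos : 0 < L := by positivity
    have hLle : L ≤ L₀ := by
      rw [hLdef, div_le_iff₀ hμpos]
      have : c₀ ≤ μ * L₀ := (div_le_iff₀ hL₀0).mp hμ1
      linarith [this, mul_comm L₀ μ]
    have hback : c₀ / L = μ := by
      rw [hLdef]
      field_simp
    rw [hback]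
    have hmono : c * L ^ (m - 1) ≤ δ := by
      rw [hδ]
      apply mul_le_mul_of_nonneg_left _ hcpos.le
      exact Real.rpow_le_rpow hLpos.le hLle (by linarith)
    have habs1 := le_abs_self (lam j - μ)
    have habs2 := neg_abs_le (lam j - μ)
    by_cases hj : lam j ≤ N
    · have hjF : j ∈ F := by
        rw [hF, Set.Finite.mem_toFinset]
        exact hj
      have : μ ∉ Set.Icc (lam j - δ) (lam j + δ) := by
        intro hcon
        exact hμnot (Set.mem_biUnion hjF hcon)
      rw [Set.mem_Icc] at this
      push_neg at this
      rcases le_or_gt (lam j - δ) μ with h | h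
      · have := this h
        linarith
      · linarith
    · push_neg at hj
      have : lam j - μ > 1 := by
        rw [hNdef] at hj
        linarith
      linarith
end

section
/- Let (λ_i)_{i≥1} be a sequence of real numbers with λ_i ≥ −Λ for some Λ ≥ 0, and for each i let a_i : [0, 1] → ℝ be continuous, with Σ_i a_i(τ)² < ∞ for every τ and sup_{τ ∈ [0,1]} Σ_i a_i(τ)² < ∞. Define b_i(t) = e^{−λ_i t} ∫₀ᵗ e^{λ_i τ} a_i(τ) dτ. Then for every t ∈ [0, 1]: (Σ_i b_i(t)²)^{1/2} ≤ e^{Λ} · t · sup_{τ ∈ [0, t]} (Σ_i a_i(τ)²)^{1/2}. -/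
open MeasureTheory intervalIntegral

/-- Cauchy–Schwarz for interval integrals. -/
lemma sq_intervalIntegral_le {g : ℝ → ℝ} {t : ℝ} (ht : 0 ≤ t)
    (hg : IntervalIntegrable g volume 0 t)
    (hg2 : IntervalIntegrable (fun τ => g τ ^ 2) volume 0 t) :
    (∫ τ in (0:ℝ)..t, g τ) ^ 2 ≤ t * ∫ τ in (0:ℝ)..t, g τ ^ 2 := by
  set μ : Measure ℝ := volume.restrict (Set.Ioc (0:ℝ) t) with hμ
  haveI : IsFiniteMeasure μ := by
    constructor
    rw [hμ, Measure.restrict_apply_univ, Real.volume_Ioc]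
    exact ENNReal.ofReal_lt_top
  rw [intervalIntegrable_iff_integrableOn_Ioc_of_le ht] at hg hg2
  have hg_m : AEStronglyMeasurable g μ := hg.aestronglyMeasurable
  have hmem : MemLp g (ENNReal.ofReal 2) μ := by
    rw [show ENNReal.ofReal 2 = 2 by norm_num]
    exact (memLp_two_iff_integrable_sq hg_m).mpr hg2
  have hone : MemLp (fun _ : ℝ => (1:ℝ)) (ENNReal.ofReal 2) μ := memLp_const 1
  have hpq : Real.HolderConjugate 2 2 := Real.HolderConjugate.two_two
  have key := integral_mul_norm_le_Lp_mul_Lq hpq hmem hone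
  simp only [norm_one, mul_one, Real.one_rpow, MeasureTheory.integral_const,
    smul_eq_mul] at key
  have hμuniv : (μ Set.univ).toReal = t := by
    rw [hμ, Measure.restrict_apply_univ, Real.volume_Ioc]
    simp [ht]
  rw [Measure.real, hμuniv] at key
  have hnorm2 : ∀ x : ℝ, ‖x‖ ^ (2:ℝ) = x ^ 2 := fun x => by
    rw [Real.norm_eq_abs, show (2:ℝ) = ((2:ℕ):ℝ) by norm_num, Real.rpow_natCast, sq_abs]
  simp only [hnorm2] at key
  have habs : |∫ a, g a ∂μ| ≤ ∫ a, ‖g a‖ ∂μ := by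
    simpa using norm_integral_le_integral_norm (μ := μ) g
  have hA : 0 ≤ ∫ a, g a ^ 2 ∂μ := integral_nonneg fun x => sq_nonneg _
  have hsq : (∫ a, g a ∂μ) ^ 2 ≤ ((∫ a, g a ^ 2 ∂μ) ^ (1/2:ℝ) * t ^ (1/2:ℝ)) ^ 2 := by
    rw [← sq_abs]
    exact pow_le_pow_left₀ (abs_nonneg _) (habs.trans key) 2
  have hrw : ((∫ a, g a ^ 2 ∂μ) ^ (1/2:ℝ) * t ^ (1/2:ℝ)) ^ 2
      = (∫ a, g a ^ 2 ∂μ) * t := by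
    rw [mul_pow, ← Real.rpow_natCast (_ ^ (1/2:ℝ)) 2, ← Real.rpow_natCast (t ^ (1/2:ℝ)) 2,
      ← Real.rpow_mul hA, ← Real.rpow_mul ht]
    norm_num
  rw [hrw] at hsq
  rw [integral_of_le ht, integral_of_le ht]
  calc (∫ τ in Set.Ioc 0 t, g τ) ^ 2 ≤ (∫ a, g a ^ 2 ∂μ) * t := hsq
    _ = t * ∫ τ in Set.Ioc 0 t, g τ ^ 2 := mul_comm _ _



/-- ℓ²-norm estimate for the right inverse of `∂_t − L` constructed by spectral
decomposition: with eigenvalues `λ_i ≥ −Λ` and Fourier coefficients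
`a_i : [0,1] → ℝ` continuous, square-summable with uniformly bounded ℓ² norm,
the Duhamel coefficients `b_i(t) = e^{−λ_i t} ∫₀ᵗ e^{λ_i τ} a_i(τ) dτ` satisfy
`(Σ_i b_i(t)²)^{1/2} ≤ e^{Λ} · t · sup_{τ ∈ [0,t]} (Σ_i a_i(τ)²)^{1/2}` for
every `t ∈ [0, 1]`. -/
theorem stmt_8
    (Λ : ℝ) (hΛ : 0 ≤ Λ) (lam : ℕ → ℝ) (hlam : ∀ i, -Λ ≤ lam i)
    (a : ℕ → ℝ → ℝ) (ha_cont : ∀ i, ContinuousOn (a i) (Set.Icc 0 1))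
    (ha_sum : ∀ τ ∈ Set.Icc (0 : ℝ) 1, Summable (fun i => (a i τ) ^ 2))
    (ha_bdd : ∃ M : ℝ, ∀ τ ∈ Set.Icc (0 : ℝ) 1, (∑' i, (a i τ) ^ 2) ≤ M) :
    ∀ t ∈ Set.Icc (0 : ℝ) 1,
      Real.sqrt
          (∑' i, (Real.exp (-lam i * t) * ∫ τ in (0 : ℝ)..t, Real.exp (lam i * τ) * a i τ) ^ 2)
        ≤ Real.exp Λ * t *
            sSup ((fun τ => Real.sqrt (∑' i, (a i τ) ^ 2)) '' Set.Icc 0 t) := by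
  rintro t ⟨ht0, ht1⟩
  obtain ⟨M, hM⟩ := ha_bdd
  set S := sSup ((fun τ => Real.sqrt (∑' i, (a i τ) ^ 2)) '' Set.Icc 0 t) with hSdef
  have hsub : Set.Icc (0:ℝ) t ⊆ Set.Icc (0:ℝ) 1 := Set.Icc_subset_Icc le_rfl ht1
  have hbdd : BddAbove ((fun τ => Real.sqrt (∑' i, (a i τ) ^ 2)) '' Set.Icc 0 t) := by
    refine ⟨Real.sqrt M, ?_⟩
    rintro x ⟨τ, hτ, rfl⟩
    exact Real.sqrt_le_sqrt (hM τ (hsub hτ))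
  have hS_ub : ∀ τ ∈ Set.Icc (0:ℝ) t, Real.sqrt (∑' i, (a i τ) ^ 2) ≤ S :=
    fun τ hτ => le_csSup hbdd ⟨τ, hτ, rfl⟩
  have hS_nonneg : 0 ≤ S :=
    le_trans (Real.sqrt_nonneg _) (hS_ub 0 ⟨le_rfl, ht0⟩)
  -- pointwise ℓ² bound
  have htsum_le : ∀ τ ∈ Set.Icc (0:ℝ) t, (∑' i, (a i τ) ^ 2) ≤ S ^ 2 := by
    intro τ hτ
    have h1 : 0 ≤ ∑' i, (a i τ) ^ 2 := tsum_nonneg fun i => sq_nonneg _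
    have := pow_le_pow_left₀ (Real.sqrt_nonneg _) (hS_ub τ hτ) 2
    rwa [Real.sq_sqrt h1] at this
  -- integrability facts
  have hconta : ∀ i, ContinuousOn (a i) (Set.uIcc 0 t) := fun i => by
    rw [Set.uIcc_of_le ht0]
    exact (ha_cont i).mono hsub
  have I1 : ∀ i, IntervalIntegrable (fun τ => Real.exp (lam i * τ) * a i τ) volume 0 t :=
    fun i => (((Real.continuous_exp.comp (continuous_const.mul continuous_id)).continuousOn).mul
      (hconta i)).intervalIntegrable
  have I2 : ∀ i, IntervalIntegrable (fun τ => (Real.exp (lam i * τ) * a i τ) ^ 2) volume 0 t :=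
    fun i => ((((Real.continuous_exp.comp (continuous_const.mul continuous_id)).continuousOn).mul
      (hconta i)).pow 2).intervalIntegrable
  have I4 : ∀ i, IntervalIntegrable (fun τ => (a i τ) ^ 2) volume 0 t :=
    fun i => ((hconta i).pow 2).intervalIntegrable
  -- exponent bound: for τ ∈ [0,t], exp (lam i * τ) ≤ exp (lam i * t) * exp Λ
  have hexp : ∀ i, ∀ τ ∈ Set.Icc (0:ℝ) t,
      Real.exp (lam i * τ) ≤ Real.exp (lam i * t) * Real.exp Λ := by
    intro i τ ⟨hτ0, hτt⟩
    rw [← Real.exp_add]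
    apply Real.exp_le_exp.mpr
    nlinarith [hlam i, mul_nonneg (by linarith [hlam i] : (0:ℝ) ≤ lam i + Λ)
      (by linarith : (0:ℝ) ≤ t - τ)]
  -- per-index bound
  have hper : ∀ i,
      (Real.exp (-lam i * t) * ∫ τ in (0:ℝ)..t, Real.exp (lam i * τ) * a i τ) ^ 2
        ≤ Real.exp Λ ^ 2 * t * ∫ τ in (0:ℝ)..t, (a i τ) ^ 2 := by
    intro i
    have hcs := sq_intervalIntegral_le ht0 (I1 i) (I2 i)
    have hmono : (∫ τ in (0:ℝ)..t, (Real.exp (lam i * τ) * a i τ) ^ 2)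
        ≤ ∫ τ in (0:ℝ)..t, (Real.exp (lam i * t) * Real.exp Λ) ^ 2 * (a i τ) ^ 2 := by
      apply integral_mono_on ht0 (I2 i) ((I4 i).const_mul _)
      intro τ hτ
      rw [mul_pow]
      apply mul_le_mul_of_nonneg_right _ (sq_nonneg _)
      exact pow_le_pow_left₀ (Real.exp_pos _).le (hexp i τ hτ) 2
    rw [intervalIntegral.integral_const_mul] at hmono
    have hIa : 0 ≤ ∫ τ in (0:ℝ)..t, (a i τ) ^ 2 :=
      integral_nonneg ht0 fun τ _ => sq_nonneg _
    have e0 : Real.exp (-lam i * t) * (Real.exp (lam i * t) * Real.exp Λ)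
        = Real.exp Λ := by
      rw [← Real.exp_add, ← Real.exp_add]
      ring_nf
    have e1 : Real.exp (-lam i * t) ^ 2 * ((Real.exp (lam i * t) * Real.exp Λ) ^ 2)
        = Real.exp Λ ^ 2 := by
      rw [← mul_pow, e0]
    calc (Real.exp (-lam i * t) * ∫ τ in (0:ℝ)..t, Real.exp (lam i * τ) * a i τ) ^ 2
        = Real.exp (-lam i * t) ^ 2 * (∫ τ in (0:ℝ)..t, Real.exp (lam i * τ) * a i τ) ^ 2 :=
          mul_pow _ _ 2
      _ ≤ Real.exp (-lam i * t) ^ 2 * (t * ∫ τ in (0:ℝ)..t, (Real.exp (lam i * τ) * a i τ) ^ 2) :=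
          mul_le_mul_of_nonneg_left hcs (sq_nonneg _)
      _ ≤ Real.exp (-lam i * t) ^ 2 *
            (t * ((Real.exp (lam i * t) * Real.exp Λ) ^ 2 * ∫ τ in (0:ℝ)..t, (a i τ) ^ 2)) := by
          apply mul_le_mul_of_nonneg_left _ (sq_nonneg _)
          exact mul_le_mul_of_nonneg_left hmono ht0
      _ = Real.exp (-lam i * t) ^ 2 * ((Real.exp (lam i * t) * Real.exp Λ) ^ 2)
            * t * ∫ τ in (0:ℝ)..t, (a i τ) ^ 2 := by ring
      _ = Real.exp Λ ^ 2 * t * ∫ τ in (0:ℝ)..t, (a i τ) ^ 2 := by rw [e1]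
  -- finite-sum bound
  have hfin : ∀ F : Finset ℕ,
      (∑ i ∈ F, (Real.exp (-lam i * t) * ∫ τ in (0:ℝ)..t, Real.exp (lam i * τ) * a i τ) ^ 2)
        ≤ (Real.exp Λ * t * S) ^ 2 := by
    intro F
    have h1 : (∑ i ∈ F, (Real.exp (-lam i * t) * ∫ τ in (0:ℝ)..t,
        Real.exp (lam i * τ) * a i τ) ^ 2)
        ≤ ∑ i ∈ F, Real.exp Λ ^ 2 * t * ∫ τ in (0:ℝ)..t, (a i τ) ^ 2 :=
      Finset.sum_le_sum fun i _ => hper i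
    have h2 : (∑ i ∈ F, Real.exp Λ ^ 2 * t * ∫ τ in (0:ℝ)..t, (a i τ) ^ 2)
        = Real.exp Λ ^ 2 * t * ∫ τ in (0:ℝ)..t, (∑ i ∈ F, (a i τ) ^ 2) := by
      rw [← Finset.mul_sum, intervalIntegral.integral_finset_sum fun i _ => I4 i]
    have h3 : (∫ τ in (0:ℝ)..t, (∑ i ∈ F, (a i τ) ^ 2)) ≤ ∫ τ in (0:ℝ)..t, S ^ 2 := by
      have hint : IntervalIntegrable (fun τ => ∑ i ∈ F, (a i τ) ^ 2) volume 0 t := by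
        have := IntervalIntegrable.sum F (μ := volume) (a := (0:ℝ)) (b := t)
          (f := fun i τ => (a i τ) ^ 2) fun i _ => I4 i
        convert this using 1
        case e'_3 => rfl
        ext τ
        simp [Finset.sum_apply]
      apply integral_mono_on ht0 hint intervalIntegrable_const
      intro τ hτ
      calc (∑ i ∈ F, (a i τ) ^ 2) ≤ ∑' i, (a i τ) ^ 2 :=
            Summable.sum_le_tsum F (fun i _ => sq_nonneg _) (ha_sum τ (hsub hτ))
        _ ≤ S ^ 2 := htsum_le τ hτ
    have h4 : (∫ τ in (0:ℝ)..t, S ^ 2) = t * S ^ 2 := by simp [smul_eq_mul]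
    calc (∑ i ∈ F, (Real.exp (-lam i * t) * ∫ τ in (0:ℝ)..t,
          Real.exp (lam i * τ) * a i τ) ^ 2)
        ≤ Real.exp Λ ^ 2 * t * ∫ τ in (0:ℝ)..t, (∑ i ∈ F, (a i τ) ^ 2) := h1.trans_eq h2
      _ ≤ Real.exp Λ ^ 2 * t * (t * S ^ 2) := by
          apply mul_le_mul_of_nonneg_left (h3.trans_eq h4)
          exact mul_nonneg (sq_nonneg _) ht0
      _ = (Real.exp Λ * t * S) ^ 2 := by ring
  -- conclusion
  have hRHS : 0 ≤ Real.exp Λ * t * S :=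
    mul_nonneg (mul_nonneg (Real.exp_pos _).le ht0) hS_nonneg
  have htsum : (∑' i, (Real.exp (-lam i * t) * ∫ τ in (0:ℝ)..t,
      Real.exp (lam i * τ) * a i τ) ^ 2) ≤ (Real.exp Λ * t * S) ^ 2 := by
    by_cases hsummable : Summable (fun i =>
      (Real.exp (-lam i * t) * ∫ τ in (0:ℝ)..t, Real.exp (lam i * τ) * a i τ) ^ 2)
    · exact Summable.tsum_le_of_sum_le hsummable hfin
    · rw [tsum_eq_zero_of_not_summable hsummable]
      exact sq_nonneg _
  calc Real.sqrt (∑' i, (Real.exp (-lam i * t) * ∫ τ in (0:ℝ)..t,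
        Real.exp (lam i * τ) * a i τ) ^ 2)
      ≤ Real.sqrt ((Real.exp Λ * t * S) ^ 2) := Real.sqrt_le_sqrt htsum
    _ = Real.exp Λ * t * S := Real.sqrt_sq hRHS
end

section
/- Let (λ_j)_{j≥1} be a strictly increasing sequence of real numbers with λ_j → ∞. Then there exists δ > 0 such that for every δ₁ ∈ (0, δ) there exists δ₂ > δ₁, depending only on δ₁ and the sequence (λ_j), with the following property: for every square-summable sequence (a_j) of reals with I(s)² = Σ_j a_j² e^{−2λ_j s} convergent for s ∈ [t, t+2] and I(t) > 0, if I(t+1) ≥ e^{δ₁} I(t), then I(t+2) ≥ e^{δ₂} I(t+1). -/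
open Real Finset

/-- Cauchy–Schwarz for tsums of nonnegative sequences. -/
lemma cs_tsum (f g : ℕ → ℝ) (hf0 : ∀ j, 0 ≤ f j) (hg0 : ∀ j, 0 ≤ g j)
    (hf : Summable fun j => f j ^ 2) (hg : Summable fun j => g j ^ 2) :
    (∑' j, f j * g j) ^ 2 ≤ (∑' j, f j ^ 2) * ∑' j, g j ^ 2 := by
  have hfg : Summable fun j => f j * g j := by
    refine Summable.of_nonneg_of_le (fun j => mul_nonneg (hf0 j) (hg0 j)) (fun j => ?_)
      (hf.add hg)
    nlinarith [sq_nonneg (f j - g j), sq_nonneg (f j), sq_nonneg (g j)]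
  have hP : 0 ≤ (∑' j, f j ^ 2) * ∑' j, g j ^ 2 :=
    mul_nonneg (tsum_nonneg fun j => sq_nonneg _) (tsum_nonneg fun j => sq_nonneg _)
  have hle : (∑' j, f j * g j) ≤ Real.sqrt ((∑' j, f j ^ 2) * ∑' j, g j ^ 2) := by
    refine Summable.tsum_le_of_sum_le hfg (fun s => ?_)
    have h0 : 0 ≤ ∑ j ∈ s, f j * g j :=
      Finset.sum_nonneg fun j _ => mul_nonneg (hf0 j) (hg0 j)
    have h1 : (∑ j ∈ s, f j * g j) ^ 2 ≤ (∑ j ∈ s, f j ^ 2) * ∑ j ∈ s, g j ^ 2 :=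
      Finset.sum_mul_sq_le_sq_mul_sq s f g
    have h2 : (∑ j ∈ s, f j ^ 2) * ∑ j ∈ s, g j ^ 2 ≤ (∑' j, f j ^ 2) * ∑' j, g j ^ 2 :=
      mul_le_mul (Summable.sum_le_tsum s (fun j _ => sq_nonneg _) hf)
        (Summable.sum_le_tsum s (fun j _ => sq_nonneg _) hg)
        (Finset.sum_nonneg fun j _ => sq_nonneg _) (tsum_nonneg fun j => sq_nonneg _)
    calc ∑ j ∈ s, f j * g j = Real.sqrt ((∑ j ∈ s, f j * g j) ^ 2) :=
          (Real.sqrt_sq h0).symm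
      _ ≤ Real.sqrt ((∑' j, f j ^ 2) * ∑' j, g j ^ 2) := Real.sqrt_le_sqrt (h1.trans h2)
  calc (∑' j, f j * g j) ^ 2
      ≤ Real.sqrt ((∑' j, f j ^ 2) * ∑' j, g j ^ 2) ^ 2 :=
        pow_le_pow_left₀ (tsum_nonneg fun j => mul_nonneg (hf0 j) (hg0 j)) hle 2
    _ = (∑' j, f j ^ 2) * ∑' j, g j ^ 2 := Real.sq_sqrt hP

/-- Monotonicity of `p ↦ p1²/p + u q1²/(p1+q1-up)` on `(0, p1/u]`. -/
lemma gmono (u p1 q1 p p' : ℝ) (hu : 0 < u) (hp : 0 < p) (hpp' : p ≤ p')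
    (hup : u * p' ≤ p1) (hq1 : 0 ≤ q1) :
    p1 ^ 2 / p' + u * q1 ^ 2 / (p1 + q1 - u * p') ≤
      p1 ^ 2 / p + u * q1 ^ 2 / (p1 + q1 - u * p) := by
  have hp' : 0 < p' := hp.trans_le hpp'
  have hupp : u * p ≤ u * p' := by nlinarith
  have hG' : q1 ≤ p1 + q1 - u * p' := by linarith
  have hG : q1 ≤ p1 + q1 - u * p := by linarith
  rcases eq_or_lt_of_le hq1 with h0 | h0
  · rw [← h0]
    simp only [ne_eq, OfNat.ofNat_ne_zero, not_false_eq_true, zero_pow, mul_zero, zero_div,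
      add_zero]
    rw [div_le_div_iff₀ hp' hp]
    nlinarith [sq_nonneg p1]
  · have hGpos : 0 < p1 + q1 - u * p := lt_of_lt_of_le h0 hG
    have hG'pos : 0 < p1 + q1 - u * p' := lt_of_lt_of_le h0 hG'
    have h1 : u * p ≤ p1 := le_trans hupp hup
    have hp1nn : 0 ≤ p1 := le_trans (mul_pos hu hp').le hup
    have h2 : (u * p) * (u * p') ≤ p1 * p1 :=
      mul_le_mul h1 hup (mul_pos hu hp').le hp1nn
    have h3 : q1 * q1 ≤ (p1 + q1 - u * p) * (p1 + q1 - u * p') :=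
      mul_le_mul hG hG' hq1 hGpos.le
    have hkey : u ^ 2 * (p * p') * q1 ^ 2 ≤ p1 ^ 2 * ((p1 + q1 - u * p) * (p1 + q1 - u * p')) := by
      have h4 : ((u * p) * (u * p')) * (q1 * q1) ≤
          (p1 * p1) * ((p1 + q1 - u * p) * (p1 + q1 - u * p')) :=
        mul_le_mul h2 h3 (mul_nonneg hq1 hq1) (mul_nonneg hp1nn hp1nn)
      nlinarith [h4]
    rw [div_add_div _ _ (ne_of_gt hp') (ne_of_gt hG'pos),
      div_add_div _ _ (ne_of_gt hp) (ne_of_gt hGpos),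
      div_le_div_iff₀ (mul_pos hp' hG'pos) (mul_pos hp hGpos)]
    nlinarith [mul_nonneg (sub_nonneg.2 hpp') (sub_nonneg.2 hkey)]

/-- Case A of the key inequality: value at `p' = p1/E`. -/
lemma keyA (u E p1 q1 : ℝ) (hu : 1 < u) (hE : u < E) (hp1 : 0 < p1) (hq1 : 0 ≤ q1)
    (hcond : u * E * q1 ≤ E * (p1 + q1) - u * p1) :
    (u + (u - 1) * (E - u) ^ 2 / (u * (E - 1))) * (p1 + q1) ≤
      p1 ^ 2 / (p1 / E) + u * q1 ^ 2 / (p1 + q1 - u * (p1 / E)) := by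
  have hu0 : (0:ℝ) < u := by linarith
  have hE0 : (0:ℝ) < E := by linarith
  have hE1 : (0:ℝ) < E - 1 := by linarith
  have hD : 0 < E * (p1 + q1) - u * p1 := by nlinarith
  have e1 : p1 ^ 2 / (p1 / E) = E * p1 := by
    field_simp
  have e2 : p1 + q1 - u * (p1 / E) = (E * (p1 + q1) - u * p1) / E := by
    field_simp
  have e3 : u * q1 ^ 2 / ((E * (p1 + q1) - u * p1) / E) =
      u * q1 ^ 2 * E / (E * (p1 + q1) - u * p1) := by
    rw [div_div_eq_mul_div]
  rw [e1, e2, e3, ← sub_nonneg]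
  have expand : E * p1 + u * q1 ^ 2 * E / (E * (p1 + q1) - u * p1) -
      (u + (u - 1) * (E - u) ^ 2 / (u * (E - 1))) * (p1 + q1) =
      ((E - u) ^ 2 * ((p1 + q1) * ((E - u) * p1 - (u - 1) * E * q1)) +
        u * (u - 1) * (E - u) ^ 2 * ((p1 + q1) * p1)) /
        (u * (E - 1) * (E * (p1 + q1) - u * p1)) := by
    rw [add_div' _ _ _ hD.ne', add_div' _ _ _ (mul_pos hu0 hE1).ne', div_mul_eq_mul_div,
      div_sub_div _ _ hD.ne' (mul_pos hu0 hE1).ne',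
      div_eq_div_iff (mul_pos hD (mul_pos hu0 hE1)).ne' (mul_pos (mul_pos hu0 hE1) hD).ne']
    ring
  rw [expand]
  apply div_nonneg _ ((mul_pos (mul_pos hu0 hE1) hD).le)
  have hc : 0 ≤ (E - u) * p1 - (u - 1) * E * q1 := by nlinarith
  have hT : 0 ≤ p1 + q1 := by linarith
  have t1 : 0 ≤ (E - u) ^ 2 * ((p1 + q1) * ((E - u) * p1 - (u - 1) * E * q1)) :=
    mul_nonneg (sq_nonneg _) (mul_nonneg hT hc)
  have t2 : 0 ≤ u * (u - 1) * (E - u) ^ 2 * ((p1 + q1) * p1) :=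
    mul_nonneg (mul_nonneg (mul_nonneg hu0.le (by linarith)) (sq_nonneg _))
      (mul_nonneg hT hp1.le)
  linarith

/-- Case B of the key inequality: value at `p' = (p1+q1-u q1)/u`. -/
lemma keyB (u E p1 q1 : ℝ) (hu : 1 < u) (hE : u < E) (hp1 : 0 < p1) (hq1 : 0 < q1)
    (hY : 0 < p1 + q1 - u * q1)
    (hcond : E * (p1 + q1 - u * q1) ≤ u * p1) :
    (u + (u - 1) * (E - u) ^ 2 / (u * (E - 1))) * (p1 + q1) ≤
      p1 ^ 2 / ((p1 + q1 - u * q1) / u) +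
        u * q1 ^ 2 / (p1 + q1 - u * ((p1 + q1 - u * q1) / u)) := by
  have hu0 : (0:ℝ) < u := by linarith
  have hE1 : (0:ℝ) < E - 1 := by linarith
  have e1 : p1 ^ 2 / ((p1 + q1 - u * q1) / u) = u * p1 ^ 2 / (p1 + q1 - u * q1) := by
    rw [div_div_eq_mul_div]
    ring
  have e2 : p1 + q1 - u * ((p1 + q1 - u * q1) / u) = u * q1 := by
    field_simp
    ring
  have e3 : u * q1 ^ 2 / (u * q1) = q1 := by
    field_simp
  rw [e1, e2, e3, ← sub_nonneg]
  have expand : u * p1 ^ 2 / (p1 + q1 - u * q1) + q1 -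
      (u + (u - 1) * (E - u) ^ 2 / (u * (E - 1))) * (p1 + q1) =
      ((u - 1) * (E - 1) * ((p1 + q1) * (u * p1 - E * (p1 + q1 - u * q1))) +
        (u - 1) ^ 2 * (E - u) * ((p1 + q1) * (p1 + q1 - u * q1))) /
        (u * (E - 1) * (p1 + q1 - u * q1)) := by
    field_simp
    ring
  rw [expand]
  apply div_nonneg _ ((mul_pos (mul_pos hu0 hE1) hY).le)
  have hc : 0 ≤ u * p1 - E * (p1 + q1 - u * q1) := by linarith
  have hT : 0 ≤ p1 + q1 := by linarith
  have t1 : 0 ≤ (u - 1) * (E - 1) * ((p1 + q1) * (u * p1 - E * (p1 + q1 - u * q1))) :=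
    mul_nonneg (mul_nonneg (by linarith) hE1.le) (mul_nonneg hT hc)
  have t2 : 0 ≤ (u - 1) ^ 2 * (E - u) * ((p1 + q1) * (p1 + q1 - u * q1)) :=
    mul_nonneg (mul_nonneg (sq_nonneg _) (by linarith)) (mul_nonneg hT hY.le)
  linarith

/-- The key finite-dimensional inequality. -/
lemma key (u E p0 p1 q1 : ℝ) (hu : 1 < u) (hE : u < E) (hp0 : 0 < p0)
    (h1 : E * p0 ≤ p1) (hq1 : 0 ≤ q1) (h5 : u * (p0 + q1) ≤ p1 + q1) :
    (u + (u - 1) * (E - u) ^ 2 / (u * (E - 1))) * (p1 + q1) ≤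
      p1 ^ 2 / p0 + u * q1 ^ 2 / (p1 + q1 - u * p0) := by
  have hu0 : (0:ℝ) < u := by linarith
  have hE0 : (0:ℝ) < E := by linarith
  have hp1 : 0 < p1 := lt_of_lt_of_le (mul_pos hE0 hp0) h1
  rcases le_total (p1 / E) ((p1 + q1 - u * q1) / u) with hcase | hcase
  · -- p' = p1 / E
    have hpp' : p0 ≤ p1 / E := by rw [le_div_iff₀ hE0]; linarith
    have hup : u * (p1 / E) ≤ p1 := by
      rw [mul_div_assoc' u p1 E, div_le_iff₀ hE0]; nlinarith
    have hstep := gmono u p1 q1 p0 (p1 / E) hu0 hp0 hpp' hup hq1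
    refine le_trans (keyA u E p1 q1 hu hE hp1 hq1 ?_) hstep
    rw [div_le_div_iff₀ hE0 hu0] at hcase
    nlinarith
  · -- p' = (p1+q1-u q1)/u
    have hq1pos : 0 < q1 := by
      rcases eq_or_lt_of_le hq1 with h0 | h0
      · exfalso
        rw [div_le_div_iff₀ hu0 hE0] at hcase
        rw [← h0] at hcase
        nlinarith
      · exact h0
    have hY : 0 < p1 + q1 - u * q1 := by nlinarith [mul_pos hu0 hp0]
    have hpp' : p0 ≤ (p1 + q1 - u * q1) / u := by rw [le_div_iff₀ hu0]; nlinarith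
    have hup : u * ((p1 + q1 - u * q1) / u) ≤ p1 := by
      rw [mul_div_assoc' u _ u, mul_comm, mul_div_assoc, div_self (ne_of_gt hu0), mul_one]
      nlinarith
    have hstep := gmono u p1 q1 p0 ((p1 + q1 - u * q1) / u) hu0 hp0 hpp' hup hq1
    refine le_trans (keyB u E p1 q1 hu hE hp1 hq1pos hY ?_) hstep
    rw [div_le_div_iff₀ hu0 hE0] at hcase
    nlinarith

/-- Main inequality combining the spectral split. -/
lemma main_ineq (u E p0 p1 p2 q0 q1 q2 : ℝ) (hu : 1 < u) (hE : u < E)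
    (hp0 : 0 ≤ p0) (hq0 : 0 ≤ q0) (hq1 : 0 ≤ q1) (hq2 : 0 ≤ q2)
    (hA : E * p0 ≤ p1) (hB : E * p1 ≤ p2) (hC : p1 ^ 2 ≤ p0 * p2) (hD : q1 ≤ q0)
    (hF : q1 ^ 2 ≤ q0 * q2) (hG : u * (p0 + q0) ≤ p1 + q1) (hpos : 0 < p1 + q1) :
    (u + (u - 1) * (E - u) ^ 2 / (u * (E - 1))) * (p1 + q1) ≤ p2 + q2 := by
  have hu0 : (0:ℝ) < u := by linarith
  have hE0 : (0:ℝ) < E := by linarith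
  have hp1 : 0 ≤ p1 := le_trans (mul_nonneg hE0.le hp0) hA
  by_cases hp1z : p1 = 0
  · exfalso
    have hq0z : q0 ≤ 0 := by nlinarith
    nlinarith
  have hp1pos : 0 < p1 := lt_of_le_of_ne hp1 (Ne.symm hp1z)
  have hp2 : 0 < p2 := lt_of_lt_of_le (mul_pos hE0 hp1pos) hB
  have hp0pos : 0 < p0 := by
    by_contra h
    push_neg at h
    have : 0 ≤ (-p0) * p2 := mul_nonneg (neg_nonneg.2 h) hp2.le
    nlinarith [mul_pos hp1pos hp1pos]
  have hGpos : 0 < p1 + q1 - u * p0 := by nlinarith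
  have hq2' : u * q1 ^ 2 / (p1 + q1 - u * p0) ≤ q2 := by
    rcases eq_or_lt_of_le hq1 with h0 | h0
    · rw [← h0]
      simp only [ne_eq, OfNat.ofNat_ne_zero, not_false_eq_true, zero_pow, mul_zero, zero_div]
      exact hq2
    · have hq0pos : 0 < q0 := by
        by_contra h
        push_neg at h
        have hq2n : 0 ≤ (-q0) * q2 := mul_nonneg (neg_nonneg.2 h) hq2
        nlinarith [mul_pos h0 h0]
      have step1 : u * q1 ^ 2 / (p1 + q1 - u * p0) ≤ q1 ^ 2 / q0 := by
        rw [div_le_div_iff₀ hGpos hq0pos]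
        nlinarith [sq_nonneg q1]
      have step2 : q1 ^ 2 / q0 ≤ q2 := by
        rw [div_le_iff₀ hq0pos]
        nlinarith
      linarith
  have hp2' : p1 ^ 2 / p0 ≤ p2 := by
    rw [div_le_iff₀ hp0pos]
    nlinarith
  have h5 : u * (p0 + q1) ≤ p1 + q1 := by nlinarith [mul_le_mul_of_nonneg_left hD hu0.le]
  have := key u E p0 p1 q1 hu hE hp0pos hA hq1 h5
  linarith

/-- Splitting a tsum into a finite part and the rest. -/
lemma split_tsum (T : Finset ℕ) (f : ℕ → ℝ) (hf : Summable f) :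
    ∑' j, f j = (∑ j ∈ T, f j) + ∑' j, (if j ∈ T then 0 else f j) := by
  have h1 : Summable (fun j => if j ∈ T then f j else 0) :=
    summable_of_ne_finset_zero (s := T) (fun b hb => if_neg hb)
  have h2 : Summable (fun j => if j ∈ T then 0 else f j) := by
    have e : (fun j => if j ∈ T then 0 else f j) =
        fun j => f j - (if j ∈ T then f j else 0) := by
      funext j; split_ifs <;> ring
    rw [e]
    exact hf.sub h1
  have h3 : ∀ j, f j = (if j ∈ T then f j else 0) + (if j ∈ T then 0 else f j) := by
    intro j; split_ifs <;> ring
  calc ∑' j, f j = ∑' j, ((if j ∈ T then f j else 0) + (if j ∈ T then 0 else f j)) :=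
        tsum_congr h3
    _ = (∑' j, if j ∈ T then f j else 0) + ∑' j, (if j ∈ T then 0 else f j) :=
        Summable.tsum_add h1 h2
    _ = (∑ j ∈ T, f j) + ∑' j, (if j ∈ T then 0 else f j) := by
        rw [tsum_eq_sum (s := T) (fun b hb => if_neg hb)]
        congr 1
        exact Finset.sum_congr rfl (fun j hj => if_pos hj)

/-- Spectral form of part (i) of the three-annulus lemma of
Lotay–Schulze–Székelyhidi: for a strictly increasing sequence `λ_j → ∞` of
eigenvalues, there is `δ > 0` such that for every `δ₁ ∈ (0, δ)` there is
`δ₂ > δ₁` (depending only on `δ₁` and the sequence) with: for every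
square-summable `(a_j)` with `I(s)² = Σ_j a_j² e^{−2λ_j s}` convergent on
`[t, t+2]` and `I(t) > 0`, if `I(t+1) ≥ e^{δ₁} I(t)` then
`I(t+2) ≥ e^{δ₂} I(t+1)`. -/
theorem stmt_13
    (lam : ℕ → ℝ) (hmono : StrictMono lam)
    (hlim : Filter.Tendsto lam Filter.atTop Filter.atTop) :
    ∃ δ > (0 : ℝ), ∀ δ₁ ∈ Set.Ioo (0 : ℝ) δ, ∃ δ₂ > δ₁,
      ∀ t : ℝ, ∀ a : ℕ → ℝ, Summable (fun j => (a j) ^ 2) →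
        (∀ s ∈ Set.Icc t (t + 2),
          Summable (fun j => (a j) ^ 2 * Real.exp (-2 * lam j * s))) →
        0 < Real.sqrt (∑' j, (a j) ^ 2 * Real.exp (-2 * lam j * t)) →
        Real.exp δ₁ * Real.sqrt (∑' j, (a j) ^ 2 * Real.exp (-2 * lam j * t)) ≤
          Real.sqrt (∑' j, (a j) ^ 2 * Real.exp (-2 * lam j * (t + 1))) →
        Real.exp δ₂ * Real.sqrt (∑' j, (a j) ^ 2 * Real.exp (-2 * lam j * (t + 1))) ≤
          Real.sqrt (∑' j, (a j) ^ 2 * Real.exp (-2 * lam j * (t + 2))) := by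
  by_cases hneg : ∃ j, lam j < 0
  case neg =>
    push_neg at hneg
    refine ⟨1, one_pos, fun δ₁ hδ₁ => ⟨δ₁ + 1, by linarith, ?_⟩⟩
    intro t a _ hsum hI0 hgrow
    exfalso
    have hmem0 : t ∈ Set.Icc t (t + 2) := ⟨le_refl t, by linarith⟩
    have hmem1 : t + 1 ∈ Set.Icc t (t + 2) := ⟨by linarith, by linarith⟩
    have h1 : (∑' j, (a j) ^ 2 * Real.exp (-2 * lam j * (t + 1))) ≤
        ∑' j, (a j) ^ 2 * Real.exp (-2 * lam j * t) := by
      refine Summable.tsum_le_tsum (fun j => ?_) (hsum _ hmem1) (hsum _ hmem0)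
      have : (-2) * lam j * (t + 1) ≤ -2 * lam j * t := by nlinarith [hneg j]
      exact mul_le_mul_of_nonneg_left (Real.exp_le_exp.2 this) (sq_nonneg _)
    have h2 := Real.sqrt_le_sqrt h1
    have h3 : (1:ℝ) < Real.exp δ₁ := by
      have := Real.exp_lt_exp.2 hδ₁.1
      rwa [Real.exp_zero] at this
    nlinarith
  case pos =>
    obtain ⟨j₀, hj₀⟩ := hneg
    obtain ⟨M, hM⟩ := Filter.eventually_atTop.1 (hlim.eventually (Filter.eventually_ge_atTop 0))
    set T : Finset ℕ := (Finset.range M).filter (fun j => lam j < 0) with hT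
    have hmemT : ∀ j, j ∈ T ↔ lam j < 0 := by
      intro j
      constructor
      · intro hj
        exact (Finset.mem_filter.1 hj).2
      · intro hj
        refine Finset.mem_filter.2 ⟨Finset.mem_range.2 ?_, hj⟩
        by_contra h
        push_neg at h
        exact absurd (hM j h) (by linarith)
    have hTne : T.Nonempty := ⟨j₀, (hmemT j₀).2 hj₀⟩
    set N := T.max' hTne with hN
    have hNmem : lam N < 0 := (hmemT N).1 (T.max'_mem hTne)
    set δ := -lam N with hδdef
    have hδ : 0 < δ := by simp only [hδdef]; linarith
    have hbig : ∀ j ∈ T, lam j ≤ -δ := by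
      intro j hj
      have h1 : j ≤ N := T.le_max' j hj
      have h2 : lam j ≤ lam N := hmono.monotone h1
      simp only [hδdef]
      linarith
    refine ⟨δ, hδ, ?_⟩
    rintro δ₁ ⟨hδ₁0, hδ₁δ⟩
    set u := Real.exp (2 * δ₁) with hudef
    set E := Real.exp (2 * δ) with hEdef
    have hu1 : 1 < u := by
      have := Real.exp_lt_exp.2 (show (0:ℝ) < 2 * δ₁ by linarith)
      rwa [Real.exp_zero] at this
    have huE : u < E := Real.exp_lt_exp.2 (by linarith)
    have hu0 : (0:ℝ) < u := by linarith
    have hvgt : u < u + (u - 1) * (E - u) ^ 2 / (u * (E - 1)) := by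
      have h1 : 0 < (u - 1) * (E - u) ^ 2 / (u * (E - 1)) :=
        div_pos (mul_pos (by linarith) (pow_pos (by linarith) 2))
          (mul_pos hu0 (by linarith))
      linarith
    set v := u + (u - 1) * (E - u) ^ 2 / (u * (E - 1)) with hvdef
    have hv0 : 0 < v := by linarith
    refine ⟨Real.log v / 2, ?_, ?_⟩
    · have h1 : Real.log u < Real.log v := Real.log_lt_log hu0 hvgt
      have h2 : Real.log u = 2 * δ₁ := by rw [hudef, Real.log_exp]
      linarith
    · intro t a _ hsum hI0 hgrow
      set c : ℕ → ℝ := fun j => a j ^ 2 * Real.exp (-2 * lam j * t) with hc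
      set r : ℕ → ℝ := fun j => Real.exp (-2 * lam j) with hr
      have hc0 : ∀ j, 0 ≤ c j := fun j => mul_nonneg (sq_nonneg _) (Real.exp_nonneg _)
      have hr0 : ∀ j, 0 < r j := fun j => Real.exp_pos _
      have hrew1 : ∀ j, a j ^ 2 * Real.exp (-2 * lam j * (t + 1)) = c j * r j := by
        intro j
        rw [hc, hr]
        simp only
        rw [show (-2) * lam j * (t + 1) = -2 * lam j * t + -2 * lam j by ring, Real.exp_add]
        ring
      have hrew2 : ∀ j, a j ^ 2 * Real.exp (-2 * lam j * (t + 2)) = c j * r j ^ 2 := by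
        intro j
        rw [hc, hr]
        simp only
        rw [show (-2) * lam j * (t + 2) = -2 * lam j * t + (-2 * lam j + -2 * lam j) by ring,
          Real.exp_add, Real.exp_add]
        ring
      have hS0 : Summable c := hsum t ⟨le_refl t, by linarith⟩
      have hS1 : Summable (fun j => c j * r j) :=
        (hsum (t + 1) ⟨by linarith, by linarith⟩).congr hrew1
      have hS2 : Summable (fun j => c j * r j ^ 2) :=
        (hsum (t + 2) ⟨by linarith, le_refl _⟩).congr hrew2
      -- rewrite the goal and hypotheses in terms of c and r
      rw [tsum_congr hrew1] at hgrow ⊢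
      rw [tsum_congr hrew2]
      set p0 := ∑ j ∈ T, c j with hp0def
      set p1 := ∑ j ∈ T, c j * r j with hp1def
      set p2 := ∑ j ∈ T, c j * r j ^ 2 with hp2def
      set q0 := ∑' j, (if j ∈ T then 0 else c j) with hq0def
      set q1 := ∑' j, (if j ∈ T then 0 else c j * r j) with hq1def
      set q2 := ∑' j, (if j ∈ T then 0 else c j * r j ^ 2) with hq2def
      have hsplit0 : ∑' j, c j = p0 + q0 := split_tsum T c hS0
      have hsplit1 : ∑' j, c j * r j = p1 + q1 := split_tsum T _ hS1
      have hsplit2 : ∑' j, c j * r j ^ 2 = p2 + q2 := split_tsum T _ hS2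
      have hq0sum : Summable (fun j => if j ∈ T then 0 else c j) :=
        Summable.of_nonneg_of_le (fun j => by split_ifs <;> simp [hc0 j])
          (fun j => by split_ifs <;> simp [hc0 j]) hS0
      have hq1sum : Summable (fun j => if j ∈ T then 0 else c j * r j) :=
        Summable.of_nonneg_of_le
          (fun j => by split_ifs with h
                       exacts [le_refl _, mul_nonneg (hc0 j) (hr0 j).le])
          (fun j => by split_ifs with h
                       exacts [mul_nonneg (hc0 j) (hr0 j).le, le_refl _])
          hS1
      have hq2sum : Summable (fun j => if j ∈ T then 0 else c j * r j ^ 2) :=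
        Summable.of_nonneg_of_le
          (fun j => by split_ifs with h
                       exacts [le_refl _, mul_nonneg (hc0 j) (sq_nonneg _)])
          (fun j => by split_ifs with h
                       exacts [mul_nonneg (hc0 j) (sq_nonneg _), le_refl _]) hS2
      -- E ≤ r j for j ∈ T ; r j ≤ 1 for j ∉ T
      have hEr : ∀ j ∈ T, E ≤ r j := by
        intro j hj
        rw [hEdef, hr]
        exact Real.exp_le_exp.2 (by linarith [hbig j hj])
      have hr1 : ∀ j, j ∉ T → r j ≤ 1 := by
        intro j hj
        have : ¬ lam j < 0 := fun h => hj ((hmemT j).2 h)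
        rw [hr]
        exact Real.exp_le_one_iff.2 (by push_neg at this; linarith)
      -- the six inequalities
      have hA : E * p0 ≤ p1 := by
        rw [hp0def, hp1def, Finset.mul_sum]
        refine Finset.sum_le_sum (fun j hj => ?_)
        have := mul_le_mul_of_nonneg_left (hEr j hj) (hc0 j)
        linarith [this]
      have hB : E * p1 ≤ p2 := by
        rw [hp1def, hp2def, Finset.mul_sum]
        refine Finset.sum_le_sum (fun j hj => ?_)
        have := mul_le_mul_of_nonneg_left (hEr j hj) (mul_nonneg (hc0 j) (hr0 j).le)
        nlinarith [this]
      have hC : p1 ^ 2 ≤ p0 * p2 := by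
        have hcs := Finset.sum_mul_sq_le_sq_mul_sq T (fun j => Real.sqrt (c j))
          (fun j => Real.sqrt (c j) * r j)
        have e1 : ∑ j ∈ T, Real.sqrt (c j) * (Real.sqrt (c j) * r j) = p1 := by
          rw [hp1def]
          refine Finset.sum_congr rfl (fun j _ => ?_)
          rw [← mul_assoc, Real.mul_self_sqrt (hc0 j)]
        have e2 : ∑ j ∈ T, Real.sqrt (c j) ^ 2 = p0 := by
          rw [hp0def]
          exact Finset.sum_congr rfl (fun j _ => Real.sq_sqrt (hc0 j))
        have e3 : ∑ j ∈ T, (Real.sqrt (c j) * r j) ^ 2 = p2 := by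
          rw [hp2def]
          refine Finset.sum_congr rfl (fun j _ => ?_)
          rw [mul_pow, Real.sq_sqrt (hc0 j)]
        rw [e1, e2, e3] at hcs
        exact hcs
      have hD : q1 ≤ q0 := by
        rw [hq1def, hq0def]
        refine Summable.tsum_le_tsum (fun j => ?_) hq1sum hq0sum
        split_ifs with h
        · exact le_refl _
        · have := mul_le_mul_of_nonneg_left (hr1 j h) (hc0 j)
          linarith [this]
      have hF : q1 ^ 2 ≤ q0 * q2 := by
        set f : ℕ → ℝ := fun j => if j ∈ T then 0 else Real.sqrt (c j) with hfdef
        set g : ℕ → ℝ := fun j => if j ∈ T then 0 else Real.sqrt (c j) * r j with hgdef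
        have hf0 : ∀ j, 0 ≤ f j := by
          intro j
          rw [hfdef]
          simp only
          split_ifs
          exacts [le_refl _, Real.sqrt_nonneg _]
        have hg0 : ∀ j, 0 ≤ g j := by
          intro j
          rw [hgdef]
          simp only
          split_ifs with h
          exacts [le_refl _, mul_nonneg (Real.sqrt_nonneg _) (hr0 j).le]
        have hfeq : ∀ j, (if j ∈ T then 0 else c j) = f j ^ 2 := by
          intro j
          rw [hfdef]
          simp only
          split_ifs with h
          · simp
          · exact (Real.sq_sqrt (hc0 j)).symm
        have hgeq : ∀ j, (if j ∈ T then 0 else c j * r j ^ 2) = g j ^ 2 := by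
          intro j
          rw [hgdef]
          simp only
          split_ifs with h
          · simp
          · rw [mul_pow, Real.sq_sqrt (hc0 j)]
        have hfgeq : ∀ j, (if j ∈ T then 0 else c j * r j) = f j * g j := by
          intro j
          rw [hfdef, hgdef]
          simp only
          split_ifs with h
          · simp
          · rw [← mul_assoc, Real.mul_self_sqrt (hc0 j)]
        have hfs : Summable (fun j => f j ^ 2) := hq0sum.congr hfeq
        have hgs : Summable (fun j => g j ^ 2) := hq2sum.congr hgeq
        have hcs := cs_tsum f g hf0 hg0 hfs hgs
        rw [hq1def, hq0def, hq2def, tsum_congr hfeq, tsum_congr hgeq, tsum_congr hfgeq]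
        exact hcs
      have hS0nn : 0 ≤ ∑' j, c j := tsum_nonneg hc0
      have hS1nn : 0 ≤ ∑' j, c j * r j :=
        tsum_nonneg (fun j => mul_nonneg (hc0 j) (hr0 j).le)
      have hG : u * (p0 + q0) ≤ p1 + q1 := by
        have hsq := pow_le_pow_left₀
          (mul_nonneg (Real.exp_nonneg δ₁) (Real.sqrt_nonneg _)) hgrow 2
        rw [mul_pow, Real.sq_sqrt hS0nn, Real.sq_sqrt hS1nn] at hsq
        have hexp2 : Real.exp δ₁ ^ 2 = u := by
          rw [hudef, sq, ← Real.exp_add]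
          congr 1
          ring
        rw [hexp2, hsplit0, hsplit1] at hsq
        exact hsq
      have hpos : 0 < p1 + q1 := by
        rw [← hsplit1]
        have h1 : 0 < Real.exp δ₁ * Real.sqrt (∑' j, c j) :=
          mul_pos (Real.exp_pos _) hI0
        have h2 : 0 < Real.sqrt (∑' j, c j * r j) := lt_of_lt_of_le h1 hgrow
        exact Real.sqrt_pos.1 h2
      have hq0nn : 0 ≤ q0 := tsum_nonneg (fun j => by split_ifs <;> simp [hc0 j])
      have hq1nn : 0 ≤ q1 := tsum_nonneg (fun j => by
        split_ifs with h
        exacts [le_refl _, mul_nonneg (hc0 j) (hr0 j).le])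
      have hq2nn : 0 ≤ q2 := tsum_nonneg (fun j => by
        split_ifs with h
        exacts [le_refl _, mul_nonneg (hc0 j) (sq_nonneg _)])
      have hp0nn : 0 ≤ p0 := Finset.sum_nonneg (fun j _ => hc0 j)
      have hmain := main_ineq u E p0 p1 p2 q0 q1 q2 hu1 huE hp0nn hq0nn hq1nn hq2nn
        hA hB hC hD hF hG hpos
      -- conclude via square roots
      rw [hsplit1, hsplit2]
      have hsqrtv : Real.exp (Real.log v / 2) = Real.sqrt v := by
        have h2 : Real.exp (Real.log v / 2) ^ 2 = v := by
          rw [sq, ← Real.exp_add, show Real.log v / 2 + Real.log v / 2 = Real.log v by ring,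
            Real.exp_log hv0]
        conv_rhs => rw [← h2]
        rw [Real.sqrt_sq (Real.exp_nonneg _)]
      calc Real.exp (Real.log v / 2) * Real.sqrt (p1 + q1)
          = Real.sqrt v * Real.sqrt (p1 + q1) := by rw [hsqrtv]
        _ = Real.sqrt (v * (p1 + q1)) := (Real.sqrt_mul hv0.le _).symm
        _ ≤ Real.sqrt (p2 + q2) := Real.sqrt_le_sqrt (by rw [hvdef]; exact hmain)
end
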